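/- arXiv:2104.06025 — 4 statements merged into one kernel-verified Lean document; each statement's English description precedes it below -/
import Mathlib

section
/- Let (r_k)_{k≥1} and (s_ℓ)_{ℓ≥1} be an admissible pair of sequences. Then for all k ≠ p and all ℓ, q ≥ 1, one has r_k + s_ℓ ≠ r_p + s_q. -/
/-- An *admissible pair of sequences* consists of sequences of natural numbers
`(r k)` and `(s ℓ)` (only the values at indices `k ≥ 1` matter) satisfying:
`s 1 = 2`; `s k < r k < s (k+1)` for all `k ≥ 1`; `s (k+1) > 3 * r k` for all
`k ≥ 1`; and `r k > 2 * s k` for all `k ≥ 1`. -/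
def AdmissiblePair (r s : ℕ → ℕ) : Prop :=
  s 1 = 2 ∧ (∀ k, 1 ≤ k → s k < r k) ∧ (∀ k, 1 ≤ k → r k < s (k + 1)) ∧
    (∀ k, 1 ≤ k → 3 * r k < s (k + 1)) ∧ (∀ k, 1 ≤ k → 2 * s k < r k)

/-- The set `F = {(r k + i, s ℓ - i - 1) : k, ℓ ≥ 1, 0 ≤ i ≤ s ℓ - 1} ⊆ ℕ × ℕ`. -/
def pairSetF (r s : ℕ → ℕ) : Set (ℕ × ℕ) :=
  {p | ∃ k ℓ i : ℕ, 1 ≤ k ∧ 1 ≤ ℓ ∧ i ≤ s ℓ - 1 ∧ p = (r k + i, s ℓ - i - 1)}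

lemma adm_s_mono (r s : ℕ → ℕ)
    (hsr : ∀ k, 1 ≤ k → s k < r k) (hrs : ∀ k, 1 ≤ k → r k < s (k + 1)) :
    ∀ a b, 1 ≤ a → a ≤ b → s a ≤ s b := by
  intro a b ha hab
  induction b, hab using Nat.le_induction with
  | base => exact le_refl _
  | succ n hn ih =>
      exact le_trans ih (le_of_lt (lt_trans (hsr n (le_trans ha hn)) (hrs n (le_trans ha hn))))

lemma adm_aux (r s : ℕ → ℕ) (h : AdmissiblePair r s)
    (k p ℓ q : ℕ) (hk : 1 ≤ k) (hp : 1 ≤ p) (hℓ : 1 ≤ ℓ) (hq : 1 ≤ q)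
    (hkp : k < p) : r k + s ℓ ≠ r p + s q := by
  obtain ⟨h1, hsr, hrs, h3, h2⟩ := h
  have smono := adm_s_mono r s hsr hrs
  intro heq
  -- r is monotone via s
  have hrkp : r k < r p := by
    calc r k < s (k+1) := hrs k hk
    _ ≤ s p := smono (k+1) p (by omega) hkp
    _ < r p := hsr p hp
  have hℓq : q < ℓ := by
    by_contra hle
    push_neg at hle
    have := smono ℓ q hℓ hle
    omega
  rcases le_or_gt ℓ p with hcase | hcase
  · -- r p > s ℓ + 3 r k
    have h6 : 2 * s (k+1) < r (k+1) := h2 (k+1) (by omega)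
    have h7 : 3 * r k < s (k+1) := h3 k hk
    have h8 : r (k+1) ≤ r p := by
      rcases eq_or_lt_of_le (show k+1 ≤ p by omega) with heq' | hlt
      · exact le_of_eq (by rw [heq'])
      · refine le_of_lt ?_
        calc r (k+1) < s (k+2) := hrs (k+1) (by omega)
        _ ≤ s p := smono (k+2) p (by omega) hlt
        _ < r p := hsr p hp
    have h9 : s ℓ ≤ s p := smono ℓ p hℓ hcase
    have h10 : 2 * s p < r p := h2 p hp
    omega
  · -- ℓ ≥ p + 1
    have h11 : s (p+1) ≤ s ℓ := smono (p+1) ℓ (by omega) hcase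
    have h12 : 3 * r p < s (p+1) := h3 p hp
    have h13 : s q ≤ s (ℓ-1) := smono q (ℓ-1) hq (by omega)
    have h14 : s (ℓ-1) < r (ℓ-1) := hsr (ℓ-1) (by omega)
    have h15 : 3 * r (ℓ-1) < s ℓ := by
      have ha := h3 (ℓ-1) (by omega)
      have hb : ℓ - 1 + 1 = ℓ := by omega
      rw [hb] at ha
      omega
    omega

/-- For an admissible pair of sequences, if `k ≠ p` then `r k + s ℓ ≠ r p + s q`
for all `ℓ, q ≥ 1`. -/
theorem admissible_sum_ne (r s : ℕ → ℕ) (h : AdmissiblePair r s)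
    (k p ℓ q : ℕ) (hk : 1 ≤ k) (hp : 1 ≤ p) (hℓ : 1 ≤ ℓ) (hq : 1 ≤ q)
    (hkp : k ≠ p) : r k + s ℓ ≠ r p + s q := by
  rcases lt_or_gt_of_ne hkp with hlt | hgt
  · exact adm_aux r s h k p ℓ q hk hp hℓ hq hlt
  · intro heq
    exact adm_aux r s h p k q ℓ hp hk hq hℓ hgt heq.symm
end

section
/- Let (r_k)_{k≥1} and (s_ℓ)_{ℓ≥1} be an admissible pair of sequences. For any indices k > i ≥ 1 and any t ≥ 1, the pair (r_k + s_k − s_i, s_t − 1) belongs to F if and only if t = i. -/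
section Aux

variable {r s : ℕ → ℕ}

lemma adm_s_lt_succ (h : AdmissiblePair r s) {a : ℕ} (ha : 1 ≤ a) : s a < s (a + 1) :=
  lt_trans (h.2.1 a ha) (h.2.2.1 a ha)

lemma adm_s_lt (h : AdmissiblePair r s) {a b : ℕ} (ha : 1 ≤ a) (hab : a < b) : s a < s b := by
  induction b with
  | zero => omega
  | succ n ih =>
    rcases Nat.lt_succ_iff_lt_or_eq.mp hab with h' | h'
    · exact lt_trans (ih h') (adm_s_lt_succ h (by omega))
    · subst h'; exact adm_s_lt_succ h ha

lemma adm_s_le (h : AdmissiblePair r s) {a b : ℕ} (ha : 1 ≤ a) (hab : a ≤ b) : s a ≤ s b := by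
  rcases eq_or_lt_of_le hab with rfl | h'
  · rfl
  · exact le_of_lt (adm_s_lt h ha h')

lemma adm_two_le (h : AdmissiblePair r s) {a : ℕ} (ha : 1 ≤ a) : 2 ≤ s a := by
  have h1 := adm_s_le h (le_refl 1) ha
  have h2 := h.1
  omega

lemma adm_lt (h : AdmissiblePair r s) {a b : ℕ} (ha : 1 ≤ a) (hb : 1 ≤ b)
    (hlt : s b < s a) : b < a := by
  by_contra hc
  push_neg at hc
  have := adm_s_le h ha hc
  omega

end Aux

/-- For `k > i ≥ 1` and `t ≥ 1`, the pair `(r k + s k - s i, s t - 1)` belongs to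
`F` if and only if `t = i`. -/
theorem pairSetF_mem_iff (r s : ℕ → ℕ) (h : AdmissiblePair r s)
    (k i t : ℕ) (hik : i < k) (hi : 1 ≤ i) (ht : 1 ≤ t) :
    ((r k + s k - s i, s t - 1) : ℕ × ℕ) ∈ pairSetF r s ↔ t = i := by
  obtain ⟨hs1, hsr, hrs, h3r, h2s⟩ := h
  have h' : AdmissiblePair r s := ⟨hs1, hsr, hrs, h3r, h2s⟩
  have hsik : s i < s k := adm_s_lt h' hi hik
  have h2i : 2 ≤ s i := adm_two_le h' hi
  have h2t : 2 ≤ s t := adm_two_le h' ht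
  have hsk_rk : s k < r k := hsr k (by omega)
  have h2sk : 2 * s k < r k := h2s k (by omega)
  constructor
  · rintro ⟨k', ℓ, j, hk', hℓ, hj, heq⟩
    simp only [Prod.mk.injEq] at heq
    obtain ⟨e1, e2⟩ := heq
    have h2l : 2 ≤ s ℓ := adm_two_le h' hℓ
    have he1 : r k' + j + s i = r k + s k := by omega
    have hjl : j + s t = s ℓ := by omega
    have hk'le : k' ≤ k := by
      by_contra hc
      push_neg at hc
      have h1 := h3r k (by omega)
      have h2 : s (k + 1) ≤ s k' := adm_s_le h' (by omega) (by omega)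
      have h3 := hsr k' (by omega)
      omega
    rcases eq_or_lt_of_le hk'le with hkeq | hk'lt
    · -- k' = k
      rw [hkeq] at he1
      have hjpos : 0 < j := by omega
      have htl : t < ℓ := adm_lt h' hℓ ht (by omega)
      have hst : s t ≤ s (ℓ - 1) := adm_s_le h' ht (by omega)
      have hl3 : 3 * r (ℓ - 1) < s ℓ := by
        have := h3r (ℓ - 1) (by omega)
        rwa [Nat.sub_add_cancel (by omega)] at this
      have hl1 : s (ℓ - 1) < r (ℓ - 1) := hsr _ (by omega)
      by_contra hti
      rcases Nat.lt_or_ge t i with hti' | hti'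
      · -- t < i
        have h1 : s t < s i := adm_s_lt h' ht hti'
        have hℓk : ℓ < k := adm_lt h' (by omega) hℓ (by omega)
        have h2 : s ℓ ≤ s (k - 1) := adm_s_le h' hℓ (by omega)
        have h3 : s i ≤ s (k - 1) := adm_s_le h' hi (by omega)
        have h4 : 3 * r (k - 1) < s k := by
          have := h3r (k - 1) (by omega)
          rwa [Nat.sub_add_cancel (by omega)] at this
        have h5 : s (k - 1) < r (k - 1) := hsr _ (by omega)
        omega
      · -- i < t
        have hti2 : i < t := by omega
        have h1 : s i < s t := adm_s_lt h' hi hti2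
        have hkl : k < ℓ := adm_lt h' hℓ (by omega) (by omega)
        have h2 : s k ≤ s (ℓ - 1) := adm_s_le h' (by omega) (by omega)
        omega
    · -- k' < k
      have hrk' : r k' < s k := by
        have h1 := hrs k' (by omega)
        have h2 : s (k' + 1) ≤ s k := adm_s_le h' (by omega) (by omega)
        omega
      have hjbig : s k < j := by omega
      have htl : t < ℓ := adm_lt h' hℓ ht (by omega)
      have hst : s t ≤ s (ℓ - 1) := adm_s_le h' ht (by omega)
      have hl3 : 3 * r (ℓ - 1) < s ℓ := by
        have := h3r (ℓ - 1) (by omega)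
        rwa [Nat.sub_add_cancel (by omega)] at this
      have hl1 : s (ℓ - 1) < r (ℓ - 1) := hsr _ (by omega)
      have hkl : k < ℓ := adm_lt h' hℓ (by omega) (by omega)
      have hlk1 : ℓ = k + 1 := by
        by_contra hc
        have hkk : k + 1 ≤ ℓ - 1 := by omega
        have h2 : s (k + 1) ≤ s (ℓ - 1) := adm_s_le h' (by omega) hkk
        have h3 := h3r k (by omega)
        omega
      subst hlk1
      have h3 := h3r k (by omega)
      have h4 : s t ≤ s k := adm_s_le h' ht (by omega)
      omega
  · rintro rfl
    refine ⟨k, k, s k - s t, by omega, by omega, by omega, ?_⟩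
    simp only [Prod.mk.injEq]
    omega
end

section
/- Let (r_k)_{k≥1} and (s_ℓ)_{ℓ≥1} be an admissible pair of sequences, let A ⊆ {1, 2, …}, and let M_A be the associated antisymmetric matrix. Fix k ≥ 2 and indices 1 ≤ i, t ≤ k−1. Then: (i) if k ∈ A, the entry M_A(r_k + s_k − s_i, s_t − 1) equals (−1)^{s_k − s_i} when t = i and equals 0 when t ≠ i (so the (k−1)×(k−1) submatrix of M_A with rows r_k + s_k − s_{k−1}, …, r_k + s_k − s_1 and columns s_1 − 1, …, s_{k−1} − 1 is an anti-diagonal matrix with entries ±1 on the anti-diagonal); (ii) if k ∉ A, then M_A(r_k + s_k − s_i, s_t − 1) = 0 for all such i, t (the submatrix is zero). -/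
open Classical in
/-- The antisymmetric matrix `M_A` associated to a subset `A ⊆ {1, 2, …}`:
`M_A (m, n) = ∑_{k ∈ A} ∑_{ℓ ∈ A} ∑_{i=0}^{s ℓ − 1} (−1)^i ·
  ([(m,n) = (r k + i, s ℓ − i − 1)] − [(n,m) = (r k + i, s ℓ − i − 1)])`.
For an admissible pair of sequences, every summand with `k > m + n + 1` or
`ℓ > 2(m+n) + 2` vanishes (since `r k > k` and `s ℓ > ℓ`), so the sum below,
truncated to the finite ranges `1 ≤ k ≤ m + n + 1` and `1 ≤ ℓ ≤ 2(m+n) + 2`,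
computes the full (pointwise finitely supported) sum. -/
noncomputable def MA (r s : ℕ → ℕ) (A : Set ℕ) (m n : ℕ) : ℚ :=
  ∑ k ∈ Finset.Icc 1 (m + n + 1), ∑ l ∈ Finset.Icc 1 (2 * (m + n) + 2),
    ∑ i ∈ Finset.range (s l),
      if k ∈ A ∧ l ∈ A then
        (-1 : ℚ) ^ i *
          ((if (m, n) = (r k + i, s l - i - 1) then (1 : ℚ) else 0) -
           (if (n, m) = (r k + i, s l - i - 1) then (1 : ℚ) else 0))
      else 0

/-- The `(k−1) × (k−1)` submatrix of `M_A` with rows `r k + s k − s i`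
(`1 ≤ i ≤ k − 1`) and columns `s t − 1` (`1 ≤ t ≤ k − 1`): if `k ∈ A` it is the
anti-diagonal matrix with entries `(−1)^{s k − s i}` (so `±1`) on the
anti-diagonal and `0` elsewhere; if `k ∉ A` it is the zero matrix. -/
theorem MA_submatrix (r s : ℕ → ℕ) (h : AdmissiblePair r s) (A : Set ℕ)
    (hA : ∀ a ∈ A, 1 ≤ a) (k i t : ℕ) (hk : 2 ≤ k)
    (hi1 : 1 ≤ i) (hik : i ≤ k - 1) (ht1 : 1 ≤ t) (htk : t ≤ k - 1) :
    (k ∈ A →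
      (t = i → MA r s A (r k + s k - s i) (s t - 1) = (-1 : ℚ) ^ (s k - s i)) ∧
      (t ≠ i → MA r s A (r k + s k - s i) (s t - 1) = 0)) ∧
    (k ∉ A → MA r s A (r k + s k - s i) (s t - 1) = 0) := by
  classical
  obtain ⟨hs1, hsr, hrs, h3, h2⟩ := h
  have sstep : ∀ a, 1 ≤ a → s a < s (a + 1) := fun a ha => (hsr a ha).trans (hrs a ha)
  have sm : ∀ a b, 1 ≤ a → a < b → s a < s b := by
    intro a b ha hab
    induction b with
    | zero => omega
    | succ n ih =>
      rcases Nat.lt_succ_iff_lt_or_eq.mp hab with h' | h'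
      · exact (ih h').trans (sstep n (by omega))
      · subst h'; exact sstep a ha
  have sm' : ∀ a b, 1 ≤ a → a ≤ b → s a ≤ s b := by
    intro a b ha hab
    rcases eq_or_lt_of_le hab with h' | h'
    · exact h' ▸ le_rfl
    · exact (sm a b ha h').le
  have rm' : ∀ a b, 1 ≤ a → a ≤ b → r a ≤ r b := by
    intro a b ha hab
    rcases eq_or_lt_of_le hab with h' | h'
    · exact h' ▸ le_rfl
    · have e1 := hrs a ha
      have e2 := sm' (a + 1) b (by omega) (by omega)
      have e3 := hsr b (by omega)
      omega
  have sge : ∀ a, 1 ≤ a → a + 1 ≤ s a := by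
    intro a ha
    induction a with
    | zero => omega
    | succ n ih =>
      rcases Nat.eq_or_lt_of_le ha with h' | h'
      · have hn0 : n = 0 := by omega
        subst hn0; simp [hs1]
      · have e1 := ih (by omega)
        have e2 := sstep n (by omega)
        omega
  have hikk : i < k := by omega
  have htkk : t < k := by omega
  have hk1 : k - 1 + 1 = k := by omega
  have hsik : s i < s k := sm i k hi1 hikk
  have hsi1 : s i ≤ s (k - 1) := sm' i (k - 1) hi1 hik
  have hst1 : s t ≤ s (k - 1) := sm' t (k - 1) ht1 htk
  have hsk1 : s (k - 1) < s k := sm (k - 1) k (by omega) (by omega)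
  have h3k : 3 * r (k - 1) < s k := by have := h3 (k - 1) (by omega); rwa [hk1] at this
  have h2k : 2 * s (k - 1) < r (k - 1) := h2 (k - 1) (by omega)
  have hrk : s k < r k := hsr k (by omega)
  have h3k' : 3 * r k < s (k + 1) := h3 k (by omega)
  have hsi2 : 2 ≤ s i := by have := sge i hi1; omega
  have hst2 : 2 ≤ s t := by have := sge t ht1; omega
  have hrkk : k + 2 ≤ r k := by
    have e1 := sge k (by omega); have e2 := hsr k (by omega); omega
  have gap : ∀ l', 1 ≤ l' → s k < s l' → s l' < s (k + 1) → False := by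
    intro l' hl' ha hb
    rcases le_or_gt l' k with h' | h'
    · exact absurd (sm' l' k hl' h') (by omega)
    · exact absurd (sm' (k + 1) l' (by omega) h') (by omega)
  have gap2 : ∀ l', 1 ≤ l' → s (k - 1) < s l' → s l' < s k → False := by
    intro l' hl' ha hb
    rcases le_or_gt l' (k - 1) with h' | h'
    · exact absurd (sm' l' (k - 1) hl' h') (by omega)
    · exact absurd (sm' k l' (by omega) (by omega)) (by omega)
  have core : ∀ k' l', 1 ≤ k' → 1 ≤ l' → k' < k →
      s l' + r k' = s t + (r k + (s k - s i)) → False := by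
    intro k' l' ha hb hc heq
    have h1' : r k' ≤ r (k - 1) := rm' k' (k - 1) ha (by omega)
    have hlow : s k < s l' := by omega
    have hhigh : s l' < s (k + 1) := by omega
    exact gap l' hb hlow hhigh
  set m := r k + s k - s i with hm_def
  set n := s t - 1 with hn_def
  have hmn : m = r k + (s k - s i) := by omega
  have hn1 : n + 1 = s t := by omega
  have hkmem : k ∈ Finset.Icc 1 (m + n + 1) := by
    simp only [Finset.mem_Icc]; omega
  have hlmem : k ∈ Finset.Icc 1 (2 * (m + n) + 2) := by
    simp only [Finset.mem_Icc]; omega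
  have hdmem : s k - s i ∈ Finset.range (s k) := by
    simp only [Finset.mem_range]; omega
  have key : MA r s A m n = if k ∈ A ∧ t = i then (-1 : ℚ) ^ (s k - s i) else 0 := by
    unfold MA
    have hterm : ∀ k' ∈ Finset.Icc 1 (m + n + 1), ∀ l' ∈ Finset.Icc 1 (2 * (m + n) + 2),
        ∀ i' ∈ Finset.range (s l'),
        (if k' ∈ A ∧ l' ∈ A then
          (-1 : ℚ) ^ i' *
            ((if (m, n) = (r k' + i', s l' - i' - 1) then (1 : ℚ) else 0) -
             (if (n, m) = (r k' + i', s l' - i' - 1) then (1 : ℚ) else 0))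
        else 0) =
        if k' = k ∧ l' = k ∧ i' = s k - s i ∧ (k ∈ A ∧ t = i) then
          (-1 : ℚ) ^ (s k - s i) else 0 := by
      intro k' hk' l' hl' i' hi'
      simp only [Finset.mem_Icc, Finset.mem_range] at hk' hl' hi'
      by_cases hAA : k' ∈ A ∧ l' ∈ A
      · have hk'1 : 1 ≤ k' := hA k' hAA.1
        have hl'1 : 1 ≤ l' := hA l' hAA.2
        have hQ : (n, m) ≠ (r k' + i', s l' - i' - 1) := by
          intro hq
          have hq' := hq
          rw [Prod.mk.injEq] at hq'
          obtain ⟨e1, e2⟩ := hq'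
          have hsl : s l' = m + i' + 1 := by omega
          have hk'k : k' < k := by
            by_contra hcon
            have := rm' k k' (by omega) (by omega)
            omega
          exact core k' l' hk'1 hl'1 hk'k (by omega)
        by_cases hP : (m, n) = (r k' + i', s l' - i' - 1)
        · have hP' := hP
          rw [Prod.mk.injEq] at hP'
          obtain ⟨e1, e2⟩ := hP'
          have hsl : s l' = n + i' + 1 := by omega
          have hk'k : k' = k := by
            rcases lt_trichotomy k' k with hc | hc | hc
            · exact absurd (core k' l' hk'1 hl'1 hc (by omega)) not_false
            · exact hc
            · exfalso
              have e3 : r (k + 1) ≤ r k' := rm' (k + 1) k' (by omega) hc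
              have e4 : s (k + 1) < r (k + 1) := hsr (k + 1) (by omega)
              omega
          rw [hk'k] at e1
          have hi'd : i' = s k - s i := by omega
          have hslst : s l' = s t + i' := by omega
          have hti : t = i := by
            rcases lt_trichotomy t i with hc | hc | hc
            · exfalso
              have hst' : s t < s i := sm t i ht1 hc
              have hlow : s (k - 1) < s l' := by omega
              have hhigh : s l' < s k := by omega
              exact gap2 l' hl'1 hlow hhigh
            · exact hc
            · exfalso
              have hst' : s i < s t := sm i t hi1 hc
              have hlow : s k < s l' := by omega
              have hhigh : s l' < s (k + 1) := by omega
              exact gap l' hl'1 hlow hhigh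
          have hsteq : s t = s i := by rw [hti]
          have hl'k : l' = k := by
            have hslk : s l' = s k := by omega
            rcases lt_trichotomy l' k with hc | hc | hc
            · exact absurd (sm l' k hl'1 hc) (by omega)
            · exact hc
            · exact absurd (sm k l' (by omega) hc) (by omega)
          have hkA : k ∈ A := hk'k ▸ hAA.1
          rw [if_pos hAA, if_pos hP, if_neg hQ,
            if_pos ⟨hk'k, hl'k, hi'd, hkA, hti⟩, hi'd]
          ring
        · rw [if_pos hAA, if_neg hP, if_neg hQ, if_neg]
          · ring
          · rintro ⟨rfl, rfl, rfl, hkA, hti⟩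
            have hsteq : s t = s i := by rw [hti]
            exact hP (by rw [Prod.mk.injEq]; exact ⟨by omega, by omega⟩)
      · rw [if_neg hAA, if_neg]
        rintro ⟨rfl, rfl, -, hkA, -⟩
        exact hAA ⟨hkA, hkA⟩
    rw [Finset.sum_congr rfl fun k' hk' => Finset.sum_congr rfl fun l' hl' =>
      Finset.sum_congr rfl fun i' hi' => hterm k' hk' l' hl' i' hi']
    by_cases hC : k ∈ A ∧ t = i
    · rw [if_pos hC]
      rw [Finset.sum_eq_single_of_mem k hkmem ?_]
      rotate_left
      · intro b hb hbne
        apply Finset.sum_eq_zero; intro x _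
        apply Finset.sum_eq_zero; intro y _
        rw [if_neg]; rintro ⟨rfl, -, -, -⟩; exact hbne rfl
      rw [Finset.sum_eq_single_of_mem k hlmem ?_]
      rotate_left
      · intro b hb hbne
        apply Finset.sum_eq_zero; intro y _
        rw [if_neg]; rintro ⟨-, rfl, -, -⟩; exact hbne rfl
      rw [Finset.sum_eq_single_of_mem (s k - s i) hdmem ?_]
      rotate_left
      · intro b hb hbne
        rw [if_neg]; rintro ⟨-, -, rfl, -⟩; exact hbne rfl
      rw [if_pos ⟨rfl, rfl, rfl, hC⟩]
    · rw [if_neg hC]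
      apply Finset.sum_eq_zero; intro a _
      apply Finset.sum_eq_zero; intro b _
      apply Finset.sum_eq_zero; intro c _
      rw [if_neg]; rintro ⟨-, -, -, h4, h5⟩; exact hC ⟨h4, h5⟩
  refine ⟨fun hkA => ⟨fun hti => ?_, fun hti => ?_⟩, fun hkA => ?_⟩
  · rw [key, if_pos ⟨hkA, hti⟩]
  · rw [key, if_neg fun hc => hti hc.2]
  · rw [key, if_neg fun hc => hkA hc.1]
end

section
/- Fix n ≥ 1. For a natural number m, let V_m be the free ℚ-vector space on the set of pairs {(r,s) ∈ ℕ × ℕ : 0 ≤ r < s, r + s = m}, and for any pair (p,q) of naturals with p + q = m let ι(p,q) ∈ V_m denote the basis element e_{(p,q)} if p < q, the element 0 if p = q, and −e_{(q,p)} if p > q. Then the ℚ-linear map d : V_{2n−1} → V_{2n} determined by d(e_{(r,s)}) = ι(r+1, s) + ι(r, s+1) is a linear isomorphism (both spaces have dimension n). -/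
noncomputable section

/-- `V m`: the free `ℚ`-vector space on the set of pairs
`{(r, s) ∈ ℕ × ℕ : r < s, r + s = m}`. -/
abbrev Vspace (m : ℕ) : Type := {p : ℕ × ℕ // p.1 < p.2 ∧ p.1 + p.2 = m} →₀ ℚ

/-- For a pair `(p, q)` of naturals with `p + q = m`, the element `ι (p, q) ∈ V m`:
the basis element `e (p,q)` if `p < q`, the element `0` if `p = q`, and
`− e (q,p)` if `p > q`. -/
def iotaV (m p q : ℕ) : Vspace m :=
  if h : p < q ∧ p + q = m then Finsupp.single ⟨(p, q), h⟩ 1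
  else if h' : q < p ∧ q + p = m then - Finsupp.single ⟨(q, p), h'⟩ 1
  else 0

/-- The `ℚ`-linear map `d : V (2n−1) → V (2n)` determined on basis elements by
`d e_{(r,s)} = ι (r+1, s) + ι (r, s+1)`. -/
def dV (n : ℕ) : Vspace (2 * n - 1) →ₗ[ℚ] Vspace (2 * n) :=
  Finsupp.lift (Vspace (2 * n)) ℚ _
    fun x => iotaV (2 * n) (x.1.1 + 1) x.1.2 + iotaV (2 * n) x.1.1 (x.1.2 + 1)

/-- The index set of `Vspace m` is in bijection with `Fin ((m+1)/2)`. -/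
def idxEquiv (m : ℕ) : {p : ℕ × ℕ // p.1 < p.2 ∧ p.1 + p.2 = m} ≃ Fin ((m + 1) / 2) where
  toFun p := ⟨p.1.1, by have := p.2; omega⟩
  invFun r := ⟨(r.1, m - r.1), by have := r.2; omega⟩
  left_inv p := by
    ext
    · rfl
    · have := p.2; simp; omega
  right_inv r := rfl

/-- Telescoping sum lemma. -/
lemma telescope {M : Type*} [AddCommGroup M] [Module ℚ M] (F : ℕ → M) (p N : ℕ) (h : p ≤ N) :
    ∑ j ∈ Finset.Ico p N, ((-1 : ℚ)) ^ (j - p) • (F j + F (j + 1)) =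
      F p - ((-1 : ℚ)) ^ (N - p) • F N := by
  induction N, h using Nat.le_induction with
  | base => simp
  | succ N hN ih =>
    rw [Finset.sum_Ico_succ_top (by omega), ih]
    have h1 : N + 1 - p = (N - p) + 1 := by omega
    rw [h1, pow_succ]
    module

/-- The candidate inverse map `g : V (2n) → V (2n-1)`,
`f_{(p,q)} ↦ ∑_{j=p}^{n-1} (-1)^{j-p} e_{(j, 2n-1-j)}`. -/
def gV (n : ℕ) : Vspace (2 * n) →ₗ[ℚ] Vspace (2 * n - 1) :=
  Finsupp.lift (Vspace (2 * n - 1)) ℚ _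
    fun x => ∑ j ∈ Finset.Ico x.1.1 n,
      ((-1 : ℚ)) ^ (j - x.1.1) • iotaV (2 * n - 1) j (2 * n - 1 - j)

lemma dV_gV (n : ℕ) : (dV n).comp (gV n) = LinearMap.id := by
  apply Finsupp.lhom_ext
  intro x b
  have hx := x.2
  have hb : (Finsupp.single x b : Vspace (2 * n)) = b • Finsupp.single x 1 := by
    rw [Finsupp.smul_single, smul_eq_mul, mul_one]
  rw [hb, map_smul, map_smul, LinearMap.id_apply]
  congr 1
  -- compute on `single x 1`
  have hp : x.1.1 < n := by omega
  rw [LinearMap.comp_apply]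
  have hg : gV n (Finsupp.single x 1) =
      ∑ j ∈ Finset.Ico x.1.1 n,
        ((-1 : ℚ)) ^ (j - x.1.1) • iotaV (2 * n - 1) j (2 * n - 1 - j) := by
    simp [gV, Finsupp.lift_apply, Finsupp.sum_single_index]
  rw [hg, map_sum]
  simp only [map_smul]
  have key : ∀ j ∈ Finset.Ico x.1.1 n,
      ((-1 : ℚ)) ^ (j - x.1.1) • dV n (iotaV (2 * n - 1) j (2 * n - 1 - j)) =
      ((-1 : ℚ)) ^ (j - x.1.1) •
        (iotaV (2 * n) j (2 * n - j) + iotaV (2 * n) (j + 1) (2 * n - (j + 1))) := by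
    intro j hj
    rw [Finset.mem_Ico] at hj
    have hcond : j < 2 * n - 1 - j ∧ j + (2 * n - 1 - j) = 2 * n - 1 := by omega
    have hι : iotaV (2 * n - 1) j (2 * n - 1 - j) =
        Finsupp.single ⟨(j, 2 * n - 1 - j), hcond⟩ 1 := by
      rw [iotaV, dif_pos hcond]
    rw [hι]
    have hd : dV n (Finsupp.single ⟨(j, 2 * n - 1 - j), hcond⟩ 1) =
        iotaV (2 * n) (j + 1) (2 * n - 1 - j) + iotaV (2 * n) j (2 * n - 1 - j + 1) := by
      simp [dV, Finsupp.lift_apply, Finsupp.sum_single_index]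
    rw [hd]
    have e1 : 2 * n - 1 - j = 2 * n - (j + 1) := by omega
    have e2 : 2 * n - 1 - j + 1 = 2 * n - j := by omega
    rw [e2, e1, add_comm]
  rw [Finset.sum_congr rfl key,
    telescope (fun j => iotaV (2 * n) j (2 * n - j)) x.1.1 n (le_of_lt hp)]
  have hFn : iotaV (2 * n) n (2 * n - n) = 0 := by
    have : 2 * n - n = n := by omega
    rw [this, iotaV, dif_neg (by omega), dif_neg (by omega)]
  rw [hFn, smul_zero, sub_zero]
  have hx2 : x.1.2 = 2 * n - x.1.1 := by omega
  have hcond : x.1.1 < 2 * n - x.1.1 ∧ x.1.1 + (2 * n - x.1.1) = 2 * n := by omega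
  rw [iotaV, dif_pos hcond]
  congr 1
  ext
  · rfl
  · exact hx2.symm

theorem rank_Vspace (m : ℕ) : Module.rank ℚ (Vspace m) = ((m + 1) / 2 : ℕ) := by
  rw [rank_finsupp_self', Cardinal.mk_congr (idxEquiv m), Cardinal.mk_fin]

/-- For `n ≥ 1`, the linear map `d : V (2n−1) → V (2n)`,
`e_{(r,s)} ↦ ι (r+1, s) + ι (r, s+1)`, is a linear isomorphism
(both spaces having dimension `n`). -/
theorem dV_bijective (n : ℕ) (hn : 1 ≤ n) :
    Function.Bijective (dV n) ∧
    Module.rank ℚ (Vspace (2 * n - 1)) = n ∧ Module.rank ℚ (Vspace (2 * n)) = n := by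
  have h1 : (2 * n - 1 + 1) / 2 = n := by omega
  have h2 : (2 * n + 1) / 2 = n := by omega
  have hr1 : Module.rank ℚ (Vspace (2 * n - 1)) = n := by rw [rank_Vspace]; exact_mod_cast h1
  have hr2 : Module.rank ℚ (Vspace (2 * n)) = n := by rw [rank_Vspace]; exact_mod_cast h2
  haveI f1 : Fintype {p : ℕ × ℕ // p.1 < p.2 ∧ p.1 + p.2 = 2 * n - 1} :=
    Fintype.ofEquiv _ (idxEquiv (2 * n - 1)).symm
  haveI f2 : Fintype {p : ℕ × ℕ // p.1 < p.2 ∧ p.1 + p.2 = 2 * n} :=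
    Fintype.ofEquiv _ (idxEquiv (2 * n)).symm
  have hsurj : Function.Surjective (dV n) := by
    intro y
    exact ⟨gV n y, by rw [← LinearMap.comp_apply, dV_gV, LinearMap.id_apply]⟩
  have hfr : Module.finrank ℚ (Vspace (2 * n - 1)) = Module.finrank ℚ (Vspace (2 * n)) := by
    rw [Module.finrank, Module.finrank, hr1, hr2]
  have hinj : Function.Injective (dV n) :=
    (LinearMap.injective_iff_surjective_of_finrank_eq_finrank hfr).mpr hsurj
  exact ⟨⟨hinj, hsurj⟩, hr1, hr2⟩

end
end
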